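/- arXiv:2109.11388 — 3 statements merged into one kernel-verified Lean document; each statement's English description precedes it below -/
import Mathlib

section
/- Let λ > 0 and α ∈ (1/2, 1). Let e : [0, ∞) → ℝ be differentiable and satisfy e′(t) = −λ |e(t)|^α · sign(e(t)) for all t ≥ 0. Then e(t) = 0 for every t ≥ t_f, where t_f := λ⁻¹ (1 − α)⁻¹ |e(0)|^{1−α}. -/
/-!
Where `e ≠ 0`, the Lyapunov-type quantity `V = |e|^(1-α)` decreases at the exact constant rate
`λ (1 - α)`, since `|e|^(-α)` cancels the `|e|^α` of the dynamics. Moreover `e ė = -λ |e|^(1+α) ≤ 0`,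
so `|e|` is nonincreasing and the error cannot leave zero once it has reached it. Hence, if
`e t ≠ 0`, then `e` vanishes nowhere on `[0, t]` and `0 < V(t) = V(0) - λ (1 - α) t`, i.e. `t < t_f`.
-/

open Set

theorem Real.sign_mul_sign_of_ne_zero {r : ℝ} (hr : r ≠ 0) : Real.sign r * Real.sign r = 1 := by
  rcases Real.sign_apply_eq_of_ne_zero r hr with h | h <;> rw [h] <;> norm_num

theorem hasDerivAt_abs_of_ne_zero {x : ℝ} (hx : x ≠ 0) : HasDerivAt (|·|) (Real.sign x) x := by
  rcases hx.lt_or_gt with h | h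
  · simpa [Real.sign_of_neg h] using hasDerivAt_abs_neg h
  · simpa [Real.sign_of_pos h] using hasDerivAt_abs_pos h

theorem HasDerivAt.abs_rpow_const {f : ℝ → ℝ} {f' x : ℝ} (p : ℝ) (hf : HasDerivAt f f' x)
    (hx : f x ≠ 0) :
    HasDerivAt (fun y ↦ |f y| ^ p) (Real.sign (f x) * f' * p * |f x| ^ (p - 1)) x :=
  ((hasDerivAt_abs_of_ne_zero hx).comp x hf).rpow_const (Or.inl (abs_ne_zero.2 hx))

theorem antitoneOn_abs_of_mul_deriv_nonpos {f f' : ℝ → ℝ} {D : Set ℝ} (hD : Convex ℝ D)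
    (hf : ∀ x ∈ D, HasDerivAt f (f' x) x) (hf' : ∀ x ∈ D, f x * f' x ≤ 0) :
    AntitoneOn (fun x ↦ |f x|) D := by
  have hsq : AntitoneOn (fun x ↦ f x ^ 2) D :=
    antitoneOn_of_hasDerivWithinAt_nonpos hD
      (fun x hx ↦ ((hf x hx).continuousAt.pow 2).continuousWithinAt)
      (fun x hx ↦ ((hf x (interior_subset hx)).pow 2).hasDerivWithinAt)
      (fun x hx ↦ by have := hf' x (interior_subset hx); norm_num; linarith)
  exact fun x hx y hy hxy ↦ sq_le_sq.1 (hsq hx hy hxy)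

theorem eq_add_mul_sub_of_hasDerivAt_const {f : ℝ → ℝ} {a b c : ℝ} (hab : a ≤ b)
    (hf : ∀ x ∈ Icc a b, HasDerivAt f c x) : f b = f a + c * (b - a) := by
  rcases hab.eq_or_lt with rfl | hlt
  · simp
  obtain ⟨-, -, hslope⟩ := exists_hasDerivAt_eq_slope f (fun _ ↦ c) hlt
    (fun x hx ↦ (hf x hx).continuousAt.continuousWithinAt)
    (fun x hx ↦ hf x (Ioo_subset_Icc_self hx))
  rw [hslope, div_mul_cancel₀ _ (sub_ne_zero.2 hlt.ne')]
  ring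

section TerminalSliding

variable {e : ℝ → ℝ} {lam α : ℝ}

theorem HasDerivAt.abs_rpow_one_sub_of_terminalSliding {t : ℝ}
    (he : HasDerivAt e (-lam * |e t| ^ α * Real.sign (e t)) t) (ht : e t ≠ 0) :
    HasDerivAt (fun s ↦ |e s| ^ (1 - α)) (-(lam * (1 - α))) t := by
  have hcancel : |e t| ^ α * |e t| ^ (1 - α - 1) = 1 := by
    rw [← Real.rpow_add (abs_pos.2 ht)]
    simp
  convert he.abs_rpow_const (1 - α) ht using 1
  linear_combination (lam * (1 - α) * (|e t| ^ α * |e t| ^ (1 - α - 1))) *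
    Real.sign_mul_sign_of_ne_zero ht + lam * (1 - α) * hcancel

theorem antitoneOn_abs_of_terminalSliding (hlam : 0 ≤ lam)
    (he : ∀ t ∈ Ici (0 : ℝ), HasDerivAt e (-lam * |e t| ^ α * Real.sign (e t)) t) :
    AntitoneOn (fun t ↦ |e t|) (Ici 0) :=
  antitoneOn_abs_of_mul_deriv_nonpos (convex_Ici 0) he fun t _ ↦ by
    have hdissip : 0 ≤ lam * |e t| ^ α * (Real.sign (e t) * e t) :=
      mul_nonneg (by positivity) (Real.sign_mul_nonneg _)
    linarith

end TerminalSliding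

/-- Finite-time convergence of the terminal sliding mode dynamics
`ė = −λ |e|^α sign(e)`: the error is zero for every time past
`t_f = λ⁻¹ (1 − α)⁻¹ |e(0)|^{1−α}`. -/
theorem terminal_sliding_finite_time_convergence
    (lam α : ℝ) (hlam : 0 < lam) (hα : α ∈ Set.Ioo (1 / 2 : ℝ) 1)
    (e : ℝ → ℝ)
    (hode : ∀ t : ℝ, 0 ≤ t →
      HasDerivAt e (-lam * |e t| ^ α * Real.sign (e t)) t) :
    ∀ t : ℝ, lam⁻¹ * (1 - α)⁻¹ * |e 0| ^ (1 - α) ≤ t → e t = 0 := by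
  intro t ht
  have hone_sub_pos : 0 < 1 - α := sub_pos.2 hα.2
  have ht0 : 0 ≤ t := le_trans (by positivity) ht
  by_contra het
  have hne : ∀ r ∈ Icc 0 t, e r ≠ 0 := fun r hr her ↦ het <| abs_nonpos_iff.1 <| by
    simpa [her] using antitoneOn_abs_of_terminalSliding hlam.le hode hr.1 ht0 hr.2
  have hdecay : |e t| ^ (1 - α) = |e 0| ^ (1 - α) + -(lam * (1 - α)) * (t - 0) :=
    eq_add_mul_sub_of_hasDerivAt_const ht0 fun r hr ↦
      (hode r hr.1).abs_rpow_one_sub_of_terminalSliding (hne r hr)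
  have hpos : 0 < |e t| ^ (1 - α) := Real.rpow_pos_of_pos (abs_pos.2 het) _
  have htf : lam * (1 - α) * (lam⁻¹ * (1 - α)⁻¹ * |e 0| ^ (1 - α)) = |e 0| ^ (1 - α) := by
    field_simp
  nlinarith [mul_le_mul_of_nonneg_left ht (mul_pos hlam hone_sub_pos).le]
end

section
/- Let λ > 0 and α ∈ (1/2, 1). Let e : [0, ∞) → ℝ be differentiable and satisfy e′(t) = −λ |e(t)|^α · sign(e(t)) for all t ≥ 0. If e(t₀) = 0 for some t₀ ≥ 0, then e(t) = 0 for all t ≥ t₀ (the origin is invariant: once reached, the trajectory stays at zero). -/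
lemma mul_sign_self (x : ℝ) : x * Real.sign x = |x| := by
  rcases lt_trichotomy x 0 with h | h | h
  · rw [Real.sign_of_neg h, abs_of_neg h]; ring
  · simp [h]
  · rw [Real.sign_of_pos h, abs_of_pos h]; ring

/-- Invariance of the origin for the terminal sliding mode dynamics
`ė = −λ |e|^α sign(e)`: once the trajectory reaches zero it stays at zero. -/
theorem terminal_sliding_origin_invariant
    (lam α : ℝ) (hlam : 0 < lam) (hα : α ∈ Set.Ioo (1 / 2 : ℝ) 1)
    (e : ℝ → ℝ)
    (hode : ∀ t : ℝ, 0 ≤ t →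
      HasDerivAt e (-lam * |e t| ^ α * Real.sign (e t)) t)
    (t₀ : ℝ) (ht₀ : 0 ≤ t₀) (he : e t₀ = 0) :
    ∀ t : ℝ, t₀ ≤ t → e t = 0 := by
  intro t ht
  set g : ℝ → ℝ := fun s => (e s) ^ 2 with hg
  have hder : ∀ s : ℝ, 0 ≤ s →
      HasDerivAt g ((2 : ℕ) * e s ^ 1 * (-lam * |e s| ^ α * Real.sign (e s))) s := by
    intro s hs
    exact (hode s hs).pow 2
  have hanti : AntitoneOn g (Set.Icc t₀ t) := by
    apply antitoneOn_of_deriv_nonpos (convex_Icc t₀ t)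
    · exact fun s hs => ((hder s (le_trans ht₀ hs.1)).continuousAt).continuousWithinAt
    · intro s hs
      rw [interior_Icc] at hs
      exact ((hder s (le_trans ht₀ hs.1.le)).differentiableAt).differentiableWithinAt
    · intro s hs
      rw [interior_Icc] at hs
      rw [(hder s (le_trans ht₀ hs.1.le)).deriv]
      have h1 : e s * Real.sign (e s) = |e s| := mul_sign_self (e s)
      have h2 : (0:ℝ) ≤ |e s| ^ α := Real.rpow_nonneg (abs_nonneg _) _
      have h3 : (0:ℝ) ≤ |e s| := abs_nonneg _
      have : ((2 : ℕ) : ℝ) * e s ^ 1 * (-lam * |e s| ^ α * Real.sign (e s))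
          = -(2 * lam * (|e s| ^ α * |e s|)) := by
        rw [← h1]; ring
      rw [this, neg_nonpos]
      positivity
  have hle : g t ≤ g t₀ := hanti ⟨le_refl t₀, ht⟩ ⟨ht, le_refl t⟩ ht
  have hge : 0 ≤ g t := sq_nonneg _
  have : g t = 0 := le_antisymm (by simpa [hg, he] using hle) hge
  exact pow_eq_zero_iff (two_ne_zero) |>.mp this
end

section
/- Let λ > 0, α ∈ (1/2, 1), and e₀ ≠ 0. Let e : [0, ∞) → ℝ be differentiable with e(0) = e₀ and e′(t) = −λ |e(t)|^α sign(e(t)) for all t ≥ 0. Then e(t) ≠ 0 for all t ∈ [0, t_f) and e(t_f) = 0, where t_f := λ⁻¹(1−α)⁻¹ |e₀|^{1−α}; that is, t_f is exactly the first time the trajectory reaches zero. -/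
/-!
Along a solution, `V = |e|^(1-α)` satisfies `V' = -λ (1 - α)` wherever `e ≠ 0`, because the
factor `|e|^(-α) sign e` coming from the chain rule cancels `|e|^α sign e` in the dynamics.
Hence on any zero-free stretch `[0, T)` we get `|e T|^(1-α) = λ (1 - α) (t_f - T)`, so the
first zero of `e` can only occur at `t_f`, and it does occur there.
-/

open Set

theorem exists_first_eq_of_continuousOn {α β : Type*} [LinearOrder α] [TopologicalSpace α]
    [OrderClosedTopology α] [CompactIccSpace α] [TopologicalSpace β] [T1Space β]
    {f : α → β} {a b : α} {y : β} (hf : ContinuousOn f (Icc a b))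
    (hy : ∃ x ∈ Icc a b, f x = y) :
    ∃ c ∈ Icc a b, f c = y ∧ ∀ x ∈ Ico a c, f x ≠ y := by
  have hclosed : IsClosed (Icc a b ∩ f ⁻¹' {y}) :=
    hf.preimage_isClosed_of_isClosed isClosed_Icc isClosed_singleton
  obtain ⟨c, ⟨hc, hfc⟩, hleast⟩ :=
    (isCompact_Icc.of_isClosed_subset hclosed inter_subset_left).exists_isLeast hy
  refine ⟨c, hc, hfc, fun x hx hfx => ?_⟩
  exact (hleast ⟨⟨hx.1, hx.2.le.trans hc.2⟩, hfx⟩).not_gt hx.2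

theorem HasDerivAt.abs_rpow_one_sub_of_signed_rpow {e : ℝ → ℝ} {lam α t : ℝ}
    (he : HasDerivAt e (-lam * |e t| ^ α * Real.sign (e t)) t) (hne : e t ≠ 0) :
    HasDerivAt (fun s => |e s| ^ (1 - α)) (-(lam * (1 - α))) t := by
  have habs : 0 < |e t| := abs_pos.2 hne
  have hsign : (SignType.sign (e t) : ℝ) * Real.sign (e t) = 1 := by
    rcases hne.lt_or_gt with h | h
    · simp [h, Real.sign_of_neg]
    · simp [h, Real.sign_of_pos]
  have hpow : |e t| ^ α * |e t| ^ (1 - α - 1) = 1 := by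
    rw [← Real.rpow_add habs]
    norm_num
  refine (((hasDerivAt_abs hne).comp t he).rpow_const (p := 1 - α)
    (Or.inl habs.ne')).congr_deriv ?_
  simp only [Function.comp_apply]
  linear_combination (-lam * (1 - α) * (|e t| ^ α * |e t| ^ (1 - α - 1))) * hsign
    + (-lam * (1 - α)) * hpow

theorem abs_rpow_one_sub_add_eq_of_signed_rpow_ode {e : ℝ → ℝ} {lam α T : ℝ} (hα : α < 1)
    (hode : ∀ t : ℝ, 0 ≤ t → HasDerivAt e (-lam * |e t| ^ α * Real.sign (e t)) t)
    (hT : 0 ≤ T) (hne : ∀ t ∈ Ico 0 T, e t ≠ 0) :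
    |e T| ^ (1 - α) + lam * (1 - α) * T = |e 0| ^ (1 - α) := by
  have hcont : ContinuousOn (fun s => |e s| ^ (1 - α) + lam * (1 - α) * s) (Icc 0 T) :=
    fun t ht => (((hode t ht.1).continuousAt.abs.rpow_const (Or.inr (sub_pos.2 hα).le)).add
      (continuousAt_const.mul continuousAt_id)).continuousWithinAt
  have hderiv : ∀ t ∈ Ico 0 T,
      HasDerivWithinAt (fun s => |e s| ^ (1 - α) + lam * (1 - α) * s) 0 (Ici t) t := by
    intro t ht
    have hV := (hode t ht.1).abs_rpow_one_sub_of_signed_rpow (hne t ht)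
    simpa using (hV.fun_add ((hasDerivAt_id t).const_mul (lam * (1 - α)))).hasDerivWithinAt
  simpa using constant_of_has_deriv_right_zero hcont hderiv T ⟨hT, le_rfl⟩

theorem terminal_sliding_exact_reaching_time_general
    (lam α e₀ : ℝ) (hlam : 0 < lam) (hα : α ∈ Set.Ioo (1 / 2 : ℝ) 1)
    (e : ℝ → ℝ) (hinit : e 0 = e₀)
    (hode : ∀ t : ℝ, 0 ≤ t →
      HasDerivAt e (-lam * |e t| ^ α * Real.sign (e t)) t) :
    (∀ t : ℝ, t ∈ Set.Ico 0 (lam⁻¹ * (1 - α)⁻¹ * |e₀| ^ (1 - α)) → e t ≠ 0) ∧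
    e (lam⁻¹ * (1 - α)⁻¹ * |e₀| ^ (1 - α)) = 0 := by
  set tf := lam⁻¹ * (1 - α)⁻¹ * |e₀| ^ (1 - α) with htf_def
  have h1α : 0 < 1 - α := sub_pos.2 hα.2
  have htf : 0 ≤ tf := by positivity
  have hreach : ∀ T, 0 ≤ T → (∀ t ∈ Ico 0 T, e t ≠ 0) → (e T = 0 ↔ T = tf) := by
    intro T hT hne
    have hV := abs_rpow_one_sub_add_eq_of_signed_rpow_ode hα.2 hode hT hne
    have hctf : lam * (1 - α) * tf = |e₀| ^ (1 - α) := by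
      rw [htf_def]
      field_simp
    rw [← abs_eq_zero, ← Real.rpow_eq_zero (abs_nonneg _) h1α.ne',
      show |e T| ^ (1 - α) = lam * (1 - α) * (tf - T) by rw [hinit] at hV; linarith]
    rw [mul_eq_zero, or_iff_right (by positivity), sub_eq_zero, eq_comm]
  have hne : ∀ t ∈ Ico 0 tf, e t ≠ 0 := by
    rintro t ⟨ht0, htlt⟩ het
    obtain ⟨t₁, ⟨ht₁0, ht₁t⟩, het₁, hne₁⟩ := exists_first_eq_of_continuousOn
      (fun s hs => (hode s hs.1).continuousAt.continuousWithinAt) ⟨t, ⟨ht0, le_rfl⟩, het⟩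
    exact (ht₁t.trans_lt htlt).ne ((hreach t₁ ht₁0 hne₁).1 het₁)
  exact ⟨hne, (hreach tf htf hne).2 rfl⟩

/-- For a nonzero initial error, `t_f = λ⁻¹(1−α)⁻¹|e₀|^{1−α}` is exactly the
first time the terminal sliding mode trajectory reaches zero. -/
theorem terminal_sliding_exact_reaching_time
    (lam α e₀ : ℝ) (hlam : 0 < lam) (hα : α ∈ Set.Ioo (1 / 2 : ℝ) 1)
    (he₀ : e₀ ≠ 0)
    (e : ℝ → ℝ) (hinit : e 0 = e₀)
    (hode : ∀ t : ℝ, 0 ≤ t →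
      HasDerivAt e (-lam * |e t| ^ α * Real.sign (e t)) t) :
    (∀ t : ℝ, t ∈ Set.Ico 0 (lam⁻¹ * (1 - α)⁻¹ * |e₀| ^ (1 - α)) → e t ≠ 0) ∧
    e (lam⁻¹ * (1 - α)⁻¹ * |e₀| ^ (1 - α)) = 0 :=
  terminal_sliding_exact_reaching_time_general lam α e₀ hlam hα e hinit hode
end
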